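/- Let A be an associative unital k-algebra, M a left A-module which is also a k-algebra, and τ : A → End_k(M) an algebra homomorphism with τ(1) = id. Suppose F = Σᵢ xᵢ ⊗ yᵢ ∈ A ⊗ A and define a new product on M by a *_F b := Σᵢ τ(xᵢ)(a) · τ(yᵢ)(b). If F satisfies (Δ ⊗ id)(F)·F₁₂ = (id ⊗ Δ)(F)·F₂₃ for a coassociative algebra map Δ : A → A ⊗ A compatible with τ in the sense that τ(x)(ab) = Σ τ(x₍₁₎)(a)·τ(x₍₂₎)(b), then *_F is associative. -/

import Mathlib

open TensorProduct

set_option synthInstance.maxHeartbeats 400000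

section Aux

variable {k A M : Type*} [CommRing k] [Ring A] [Bialgebra k A]
    [CommRing M] [Algebra k M] (τ : A →ₐ[k] Module.End k M)

/-- the action of `A ⊗ A` on `M ⊗ M`, as an algebra hom. -/
noncomputable def psi2 : A ⊗[k] A →ₐ[k] Module.End k (M ⊗[k] M) :=
  (Module.endTensorEndAlgHom (R := k) (S := k) (A := k) (M := M) (N := M)).comp
    (Algebra.TensorProduct.map τ τ)

@[simp] lemma psi2_tmul (x y : A) (a b : M) :
    psi2 τ (x ⊗ₜ[k] y) (a ⊗ₜ[k] b) = τ x a ⊗ₜ[k] τ y b := rfl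

lemma psi2_eq (G : A ⊗[k] A) :
    (psi2 τ G : M ⊗[k] M →ₗ[k] M ⊗[k] M) =
      (TensorProduct.homTensorHomMap (.id k) M M M M)
        ((TensorProduct.map τ.toLinearMap τ.toLinearMap) G) := by
  induction G using TensorProduct.induction_on with
  | zero => simp
  | tmul x y =>
      apply TensorProduct.ext'
      intro a b
      simp [psi2_tmul]
  | add u v hu hv => simp [map_add, hu, hv]

/-- the action of `(A ⊗ A) ⊗ A` on `(M ⊗ M) ⊗ M`. -/
noncomputable def psi3l : (A ⊗[k] A) ⊗[k] A →ₐ[k] Module.End k ((M ⊗[k] M) ⊗[k] M) :=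
  (Module.endTensorEndAlgHom (R := k) (S := k) (A := k) (M := M ⊗[k] M) (N := M)).comp
    (Algebra.TensorProduct.map (psi2 τ) τ)

@[simp] lemma psi3l_tmul (G : A ⊗[k] A) (z : A) (u : M ⊗[k] M) (c : M) :
    psi3l τ (G ⊗ₜ[k] z) (u ⊗ₜ[k] c) = psi2 τ G u ⊗ₜ[k] τ z c := rfl

/-- the action of `A ⊗ (A ⊗ A)` on `M ⊗ (M ⊗ M)`. -/
noncomputable def psi3r : A ⊗[k] (A ⊗[k] A) →ₐ[k] Module.End k (M ⊗[k] (M ⊗[k] M)) :=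
  (Module.endTensorEndAlgHom (R := k) (S := k) (A := k) (M := M) (N := M ⊗[k] M)).comp
    (Algebra.TensorProduct.map τ (psi2 τ))

@[simp] lemma psi3r_tmul (x : A) (G : A ⊗[k] A) (a : M) (w : M ⊗[k] M) :
    psi3r τ (x ⊗ₜ[k] G) (a ⊗ₜ[k] w) = τ x a ⊗ₜ[k] psi2 τ G w := rfl

lemma psi3l_includeLeft (G : A ⊗[k] A) (u : M ⊗[k] M) (c : M) :
    psi3l τ (Algebra.TensorProduct.includeLeft (S := k) G) (u ⊗ₜ[k] c) =
      psi2 τ G u ⊗ₜ[k] c := by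
  have : (Algebra.TensorProduct.includeLeft (S := k) G : (A ⊗[k] A) ⊗[k] A) = G ⊗ₜ[k] 1 := rfl
  rw [this, psi3l_tmul, map_one]
  rfl

lemma psi3r_includeRight (G : A ⊗[k] A) (a : M) (w : M ⊗[k] M) :
    psi3r τ ((Algebra.TensorProduct.includeRight :
        (A ⊗[k] A) →ₐ[k] A ⊗[k] (A ⊗[k] A)) G) (a ⊗ₜ[k] w) =
      a ⊗ₜ[k] psi2 τ G w := by
  have : ((Algebra.TensorProduct.includeRight :
      (A ⊗[k] A) →ₐ[k] A ⊗[k] (A ⊗[k] A)) G) = (1 : A) ⊗ₜ[k] G := rfl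
  rw [this, psi3r_tmul, map_one]
  rfl

variable (hcompat : ∀ (x : A) (a b : M),
      τ x (a * b) = LinearMap.mul' k M
        (((TensorProduct.homTensorHomMap (.id k) M M M M)
            ((TensorProduct.map τ.toLinearMap τ.toLinearMap)
              (Coalgebra.comul (R := k) x))) (a ⊗ₜ[k] b)))

include hcompat

/-- compatibility, extended to all of `M ⊗ M`. -/
lemma compat' (x : A) (u : M ⊗[k] M) :
    τ x (LinearMap.mul' k M u) =
      LinearMap.mul' k M (psi2 τ (Coalgebra.comul (R := k) x) u) := by
  induction u using TensorProduct.induction_on with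
  | zero => simp
  | tmul a b => rw [LinearMap.mul'_apply, hcompat, psi2_eq]
  | add u v hu hv => simp only [map_add, hu, hv]

lemma left_key (G : A ⊗[k] A) (t : (M ⊗[k] M) ⊗[k] M) :
    (TensorProduct.map (LinearMap.mul' k M) LinearMap.id)
      (psi3l τ ((Algebra.TensorProduct.map (Bialgebra.comulAlgHom k A) (AlgHom.id k A)) G) t) =
    psi2 τ G ((TensorProduct.map (LinearMap.mul' k M) LinearMap.id) t) := by
  induction G using TensorProduct.induction_on with
  | zero => simp
  | tmul x y =>
      induction t using TensorProduct.induction_on with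
      | zero => simp
      | tmul u c =>
          simp only [Algebra.TensorProduct.map_tmul, AlgHom.coe_id, id_eq,
            Bialgebra.comulAlgHom_apply, psi3l_tmul, TensorProduct.map_tmul,
            LinearMap.id_coe]
          rw [← compat' τ hcompat]
          simp
      | add s t hs ht => simp only [map_add, hs, ht]
  | add u v hu hv => simp only [map_add, LinearMap.add_apply, hu, hv]

lemma right_key (G : A ⊗[k] A) (w : M ⊗[k] (M ⊗[k] M)) :
    (TensorProduct.map LinearMap.id (LinearMap.mul' k M))
      (psi3r τ ((Algebra.TensorProduct.map (AlgHom.id k A) (Bialgebra.comulAlgHom k A)) G) w) =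
    psi2 τ G ((TensorProduct.map LinearMap.id (LinearMap.mul' k M)) w) := by
  induction G using TensorProduct.induction_on with
  | zero => simp
  | tmul x y =>
      induction w using TensorProduct.induction_on with
      | zero => simp
      | tmul a v =>
          simp only [Algebra.TensorProduct.map_tmul, AlgHom.coe_id, id_eq,
            Bialgebra.comulAlgHom_apply, psi3r_tmul, TensorProduct.map_tmul,
            LinearMap.id_coe]
          rw [← compat' τ hcompat]
          simp
      | add s t hs ht => simp only [map_add, hs, ht]
  | add u v hu hv => simp only [map_add, LinearMap.add_apply, hu, hv]

omit hcompat

lemma psi3_assoc (s : A ⊗[k] (A ⊗[k] A)) (t : (M ⊗[k] M) ⊗[k] M) :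
    psi3l τ ((Algebra.TensorProduct.assoc k k k A A A).symm s) t =
      (TensorProduct.assoc k M M M).symm.toLinearMap
        (psi3r τ s ((TensorProduct.assoc k M M M).toLinearMap t)) := by
  induction s using TensorProduct.induction_on with
  | zero => simp
  | tmul x G =>
      induction G using TensorProduct.induction_on with
      | zero => simp [TensorProduct.tmul_zero]
      | tmul y z =>
          induction t using TensorProduct.induction_on with
          | zero => simp
          | tmul u c =>
              induction u using TensorProduct.induction_on with
              | zero => simp [TensorProduct.zero_tmul]
              | tmul a b =>
                  simp [Algebra.TensorProduct.assoc_symm_tmul]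
              | add u v hu hv =>
                  simp only [TensorProduct.add_tmul, map_add, hu, hv]
          | add s t hs ht => simp only [map_add, hs, ht]
      | add G H hG hH =>
          simp only [TensorProduct.tmul_add, map_add, LinearMap.add_apply, hG, hH]
  | add s s' hs hs' => simp only [map_add, LinearMap.add_apply, hs, hs']

lemma mul_assoc_tensor (t : (M ⊗[k] M) ⊗[k] M) :
    LinearMap.mul' k M ((TensorProduct.map (LinearMap.mul' k M) LinearMap.id) t) =
    LinearMap.mul' k M ((TensorProduct.map LinearMap.id (LinearMap.mul' k M))
      ((TensorProduct.assoc k M M M).toLinearMap t)) := by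
  induction t using TensorProduct.induction_on with
  | zero => simp
  | tmul u c =>
      induction u using TensorProduct.induction_on with
      | zero => simp [TensorProduct.zero_tmul]
      | tmul a b => simp [mul_assoc]
      | add u v hu hv => simp only [TensorProduct.add_tmul, map_add, hu, hv]
  | add s t hs ht => simp only [map_add, hs, ht]

end Aux

/-- if `M` is a module algebra over a bialgebra `A` (action `τ`) and
`F ∈ A ⊗ A` satisfies the cocycle condition, then the twisted product
`a *_F b = Σᵢ τ(xᵢ)(a)·τ(yᵢ)(b)` on `M` is associative. -/
theorem stmt4 {k A M : Type*} [CommRing k] [Ring A] [Bialgebra k A]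
    [CommRing M] [Algebra k M]
    -- the action of `A` on `M`, an algebra homomorphism with `τ(1) = id`
    (τ : A →ₐ[k] Module.End k M)
    -- module-algebra compatibility: τ(x)(ab) = Σ τ(x₍₁₎)(a)·τ(x₍₂₎)(b)
    (hcompat : ∀ (x : A) (a b : M),
      τ x (a * b) = LinearMap.mul' k M
        (((TensorProduct.homTensorHomMap (.id k) M M M M)
            ((TensorProduct.map τ.toLinearMap τ.toLinearMap)
              (Coalgebra.comul (R := k) x))) (a ⊗ₜ[k] b)))
    (F : A ⊗[k] A)
    -- cocycle condition (Δ ⊗ id)(F)·F₁₂ = (id ⊗ Δ)(F)·F₂₃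
    (hcoc : (Algebra.TensorProduct.map (Bialgebra.comulAlgHom k A) (AlgHom.id k A)) F *
        (Algebra.TensorProduct.includeLeft (S := k) F) =
      (Algebra.TensorProduct.assoc k k k A A A).symm
          ((Algebra.TensorProduct.map (AlgHom.id k A) (Bialgebra.comulAlgHom k A)) F) *
        (Algebra.TensorProduct.assoc k k k A A A).symm
          ((Algebra.TensorProduct.includeRight :
            (A ⊗[k] A) →ₐ[k] A ⊗[k] (A ⊗[k] A)) F))
    -- the twisted product a *_F b = Σᵢ τ(xᵢ)(a)·τ(yᵢ)(b) where F = Σᵢ xᵢ ⊗ yᵢ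
    (star : M → M → M)
    (hstar : ∀ a b : M, star a b = LinearMap.mul' k M
      (((TensorProduct.homTensorHomMap (.id k) M M M M)
          ((TensorProduct.map τ.toLinearMap τ.toLinearMap) F)) (a ⊗ₜ[k] b))) :
    ∀ a b c : M, star (star a b) c = star a (star b c) := by
  intro a b c
  have hstar' : ∀ a b : M, star a b = LinearMap.mul' k M (psi2 τ F (a ⊗ₜ[k] b)) := by
    intro a b; rw [hstar, psi2_eq]
  have key2 : LinearMap.mul' k M ((TensorProduct.map (LinearMap.mul' k M) LinearMap.id)
        (psi3l τ ((Algebra.TensorProduct.map (Bialgebra.comulAlgHom k A) (AlgHom.id k A)) F *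
          (Algebra.TensorProduct.includeLeft (S := k) F)) ((a ⊗ₜ[k] b) ⊗ₜ[k] c))) =
      LinearMap.mul' k M ((TensorProduct.map (LinearMap.mul' k M) LinearMap.id)
        (psi3l τ ((Algebra.TensorProduct.assoc k k k A A A).symm
            ((Algebra.TensorProduct.map (AlgHom.id k A) (Bialgebra.comulAlgHom k A)) F) *
          (Algebra.TensorProduct.assoc k k k A A A).symm
            ((Algebra.TensorProduct.includeRight :
              (A ⊗[k] A) →ₐ[k] A ⊗[k] (A ⊗[k] A)) F)) ((a ⊗ₜ[k] b) ⊗ₜ[k] c))) := by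
    rw [hcoc]
  -- simplify the left-hand side of `key2`
  rw [map_mul, Module.End.mul_apply, psi3l_includeLeft, left_key τ hcompat,
    TensorProduct.map_tmul] at key2
  simp only [LinearMap.id_coe, id_eq] at key2
  rw [← hstar' a b, ← hstar' (star a b) c] at key2
  -- simplify the right-hand side of `key2`
  rw [map_mul, Module.End.mul_apply, psi3_assoc, psi3_assoc] at key2
  simp only [LinearEquiv.coe_toLinearMap, LinearEquiv.apply_symm_apply,
    TensorProduct.assoc_tmul] at key2
  rw [psi3r_includeRight] at key2
  rw [mul_assoc_tensor] at key2
  simp only [LinearEquiv.coe_toLinearMap, LinearEquiv.apply_symm_apply] at key2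
  rw [right_key τ hcompat, TensorProduct.map_tmul] at key2
  simp only [LinearMap.id_coe, id_eq] at key2
  rw [← hstar' b c, ← hstar' a (star b c)] at key2
  exact key2
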